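/- Let (a_R)_{R ∈ T} be nonnegative numbers indexed by a tree T of sets rooted at R₀, partitioned into generations T = ⋃_{k≥0} T_k with children of R ∈ T_k lying in T_{k+1}, and suppose the children of each R are pairwise disjoint subsets of R. Let ID ⊂ T satisfy: for R ∈ ID, a_R μ(R) ≤ (1/2) ∑_{Q child of R} a_Q μ(Q). Assume a_R ≤ C* for all R ∈ T. Then ∑_{R ∈ T} a_R μ(R) ≤ 2 ∑_{R ∈ T \ ID} a_R μ(R) + c C* μ(R₀) for an absolute constant c. -/

import Mathlib

open MeasureTheory Set
open scoped ENNReal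

/-!
Group the sum by generations. Writing `S k` for the sum over generation `k` and `N k` for its
part outside `ID`, the ID inequality, together with the fact that each cube has a single parent,
gives `S k ≤ S (k + 1) / 2 + N k`, while the disjointness of each generation inside `R₀` gives
`S k ≤ C* μ(R₀)`. Summing the recursion over `k < K` absorbs the half,
`∑_{k<K} S k ≤ S K + 2 ∑_{k<K} N k`, and letting `K → ∞` gives the claim with `c = 1`.
-/

namespace ENNReal

theorem sum_range_le_add_two_mul_sum_range {S N : ℕ → ℝ≥0∞}
    (hrec : ∀ k, S k ≤ 2⁻¹ * S (k + 1) + N k) (K : ℕ) :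
    ∑ k ∈ Finset.range K, S k ≤ S K + 2 * ∑ k ∈ Finset.range K, N k := by
  induction K with
  | zero => simp
  | succ K ih =>
    calc ∑ k ∈ Finset.range (K + 1), S k
        ≤ S K + 2 * ∑ k ∈ Finset.range K, N k + S K := by
          rw [Finset.sum_range_succ]; gcongr
      _ = 2 * S K + 2 * ∑ k ∈ Finset.range K, N k := by ring
      _ ≤ 2 * (2⁻¹ * S (K + 1) + N K) + 2 * ∑ k ∈ Finset.range K, N k := by gcongr; exact hrec K
      _ = S (K + 1) + 2 * ∑ k ∈ Finset.range (K + 1), N k := by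
          rw [mul_add, ← mul_assoc, ENNReal.mul_inv_cancel two_ne_zero ofNat_ne_top, one_mul,
            Finset.sum_range_succ]
          ring

theorem tsum_le_two_mul_tsum_add_of_le_half_succ {S N : ℕ → ℝ≥0∞} {B : ℝ≥0∞}
    (hrec : ∀ k, S k ≤ 2⁻¹ * S (k + 1) + N k) (hB : ∀ k, S k ≤ B) :
    ∑' k, S k ≤ 2 * ∑' k, N k + B := by
  rw [ENNReal.tsum_eq_iSup_nat]
  refine iSup_le fun K => (sum_range_le_add_two_mul_sum_range hrec K).trans ?_
  rw [add_comm]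
  gcongr
  exacts [ENNReal.sum_le_tsum _, hB K]

end ENNReal

theorem MeasureTheory.tsum_mul_measure_le_of_pairwiseDisjoint {X ι : Type*} [MeasurableSpace X]
    (μ : Measure X) {s : Set ι} {E : ι → Set X} {R : Set X} {w : ι → ℝ≥0∞} {C : ℝ≥0∞}
    (hE : ∀ i ∈ s, MeasurableSet (E i)) (hdisj : s.PairwiseDisjoint E) (hER : ∀ i ∈ s, E i ⊆ R)
    (hw : ∀ i ∈ s, w i ≤ C) :
    ∑' i : s, w i * μ (E i) ≤ C * μ R :=
  calc ∑' i : s, w i * μ (E i) ≤ ∑' i : s, C * μ (E i) := by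
        gcongr with i; exact hw i i.2
    _ = C * ∑' i : s, μ (E i) := ENNReal.tsum_mul_left
    _ ≤ C * μ (⋃ i : s, E i) := by
        gcongr
        exact tsum_meas_le_meas_iUnion_of_disjoint μ (fun i => hE i i.2)
          fun i j hij => hdisj i.2 j.2 (Subtype.coe_ne_coe.2 hij)
    _ ≤ C * μ R := by
        gcongr
        exact iUnion_subset fun i => hER i i.2

section Generations

variable {ι : Type*} (f : ι → ℝ≥0∞) (gen : ι → ℕ) (ID : Set ι)

theorem tsum_generation_le_half_succ_add {par : ι → ι}
    (hID : ∀ i ∈ ID, f i ≤ 2⁻¹ * ∑' j : {j : ι // par j = i ∧ gen j = gen i + 1}, f j) (k : ℕ) :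
    ∑' i : gen ⁻¹' {k}, f i ≤
      2⁻¹ * ∑' i : gen ⁻¹' {k + 1}, f i + ∑' i : ↥(gen ⁻¹' {k} \ ID), f i := by
  have hchildren : (gen ⁻¹' {k} ∩ ID).PairwiseDisjoint
      fun i => {j | par j = i ∧ gen j = gen i + 1} :=
    fun i _ i' _ hii' => disjoint_left.2 fun j hj hj' => hii' (hj.1.symm.trans hj'.1)
  have hID_part : ∑' i : ↥(gen ⁻¹' {k} ∩ ID), f i ≤ 2⁻¹ * ∑' i : gen ⁻¹' {k + 1}, f i :=
    calc ∑' i : ↥(gen ⁻¹' {k} ∩ ID), f i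
        ≤ ∑' i : ↥(gen ⁻¹' {k} ∩ ID),
            2⁻¹ * ∑' j : ({j | par j = i ∧ gen j = gen i + 1} : Set ι), f j := by
          gcongr with i; exact hID i i.2.2
      _ = 2⁻¹ * ∑' j : ⋃ i ∈ gen ⁻¹' {k} ∩ ID, {j | par j = i ∧ gen j = gen i + 1}, f j := by
          rw [ENNReal.tsum_mul_left, ENNReal.tsum_biUnion' hchildren]
      _ ≤ 2⁻¹ * ∑' i : gen ⁻¹' {k + 1}, f i := by
          gcongr
          refine ENNReal.tsum_mono_subtype f (iUnion₂_subset fun i hi j hj => ?_)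
          simp_all
  calc ∑' i : gen ⁻¹' {k}, f i
      ≤ ∑' i : ↥(gen ⁻¹' {k} ∩ ID), f i + ∑' i : ↥(gen ⁻¹' {k} \ ID), f i := by
        conv_lhs => rw [← inter_union_sdiff (gen ⁻¹' {k}) ID]
        exact ENNReal.tsum_union_le f _ _
    _ ≤ _ := by gcongr

theorem tsum_tsum_generation_diff_le :
    ∑' k, ∑' i : ↥(gen ⁻¹' {k} \ ID), f i ≤ ∑' i : ↥IDᶜ, f i := by
  rw [← ENNReal.tsum_biUnion]
  · exact ENNReal.tsum_mono_subtype f (iUnion_subset fun k => sdiff_subset_compl _ _)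
  · exact fun k _ k' _ hkk' =>
      ((disjoint_singleton.2 hkk').preimage gen).mono sdiff_subset sdiff_subset

end Generations

/-- Iteration scheme for the packing condition: if for every `R` in the "increasing density"
family `ID` one has `a_R μ(R) ≤ (1/2) ∑_{Q child of R} a_Q μ(Q)`, the cubes of each
generation are pairwise disjoint subsets of `R₀`, and `0 ≤ a_R ≤ C*`, then
`∑_R a_R μ(R) ≤ 2 ∑_{R ∉ ID} a_R μ(R) + c C* μ(R₀)` for an absolute constant `c`. -/
theorem stmt15 :
    ∃ c : ℝ, 0 < c ∧
    ∀ (X : Type) (_ : MeasurableSpace X) (μ : Measure X), IsFiniteMeasure μ →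
    ∀ (ι : Type) (cube : ι → Set X) (gen : ι → ℕ) (par : ι → ι)
      (R₀ : Set X) (a : ι → ℝ) (ID : Set ι) (Cstar : ℝ), 0 ≤ Cstar →
      (∀ i, MeasurableSet (cube i)) →
      (∀ i, cube i ⊆ R₀) →
      -- parent structure: a child lies inside its parent, one generation down
      (∀ i, gen i ≠ 0 → gen (par i) + 1 = gen i ∧ cube i ⊆ cube (par i)) →
      -- cubes of a fixed generation are pairwise disjoint
      (∀ i j, i ≠ j → gen i = gen j → Disjoint (cube i) (cube j)) →
      (∀ i, 0 ≤ a i ∧ a i ≤ Cstar) →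
      -- the ID inequality
      (∀ i ∈ ID, ENNReal.ofReal (a i) * μ (cube i) ≤
        (1 / 2) * ∑' j : {j : ι // par j = i ∧ gen j = gen i + 1},
          ENNReal.ofReal (a j.1) * μ (cube j.1)) →
      ∑' i : ι, ENNReal.ofReal (a i) * μ (cube i) ≤
        2 * (∑' i : {i : ι // i ∉ ID}, ENNReal.ofReal (a i.1) * μ (cube i.1)) +
          ENNReal.ofReal (c * Cstar) * μ R₀ := by
  refine ⟨1, one_pos, ?_⟩
  intro X _ μ _ ι cube gen par R₀ a ID Cstar _ hmeas hsub _ hdisj ha hID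
  set f : ι → ℝ≥0∞ := fun i => ENNReal.ofReal (a i) * μ (cube i)
  have hgeneration (k : ℕ) : ∑' i : gen ⁻¹' {k}, f i ≤ ENNReal.ofReal Cstar * μ R₀ :=
    tsum_mul_measure_le_of_pairwiseDisjoint μ (fun i _ => hmeas i)
      (fun i hi j hj hij => hdisj i j hij (hi.trans hj.symm)) (fun i _ => hsub i)
      fun i _ => ENNReal.ofReal_le_ofReal (ha i).2
  have hrec := tsum_generation_le_half_succ_add f gen ID (par := par)
    (by simpa only [one_div] using hID)
  calc ∑' i, f i = ∑' k, ∑' i : gen ⁻¹' {k}, f i := (ENNReal.tsum_fiberwise f gen).symm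
    _ ≤ 2 * ∑' k, ∑' i : ↥(gen ⁻¹' {k} \ ID), f i + ENNReal.ofReal Cstar * μ R₀ :=
        ENNReal.tsum_le_two_mul_tsum_add_of_le_half_succ hrec hgeneration
    _ ≤ 2 * ∑' i : ↥IDᶜ, f i + ENNReal.ofReal (1 * Cstar) * μ R₀ := by
        rw [one_mul]
        gcongr
        exact tsum_tsum_generation_diff_le f gen ID
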